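/- arXiv:1504.02255 — 4 statements merged into one kernel-verified Lean document; each statement's English description precedes it below -/
import Mathlib

section
/- Let (G, (D, ⊓), δ) be a pattern structure with D a complete lattice, let ψ be a projection on D, and let A ⊆ G. If A is an extent of the projected pattern structure, i.e. A = {g ∈ G | ψ(⨅_{h ∈ A} δ(h)) ≤ ψ(δ(g))}, then A is an extent of the original pattern structure, i.e. A = {g ∈ G | ⨅_{h ∈ A} δ(h) ≤ δ(g)}. -/
theorem extent_of_projected_is_extent_general {G D : Type*} [CompleteLattice D]
    (δ : G → D) (ψ : D → D)
    (hmono : Monotone ψ)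
    (A : Set G)
    (hA : A = {g : G | ψ (⨅ h ∈ A, δ h) ≤ ψ (δ g)}) :
    A = {g : G | (⨅ h ∈ A, δ h) ≤ δ g} := by
  refine Set.Subset.antisymm (fun g hg => biInf_le δ hg) fun g hg => ?_
  rw [hA]
  exact hmono hg

/-- If `A` is an extent of the projected pattern structure, then `A` is an
extent of the original pattern structure. -/
theorem extent_of_projected_is_extent {G D : Type*} [CompleteLattice D]
    (δ : G → D) (ψ : D → D)
    (hmono : Monotone ψ) (hcontr : ∀ x : D, ψ x ≤ x) (hidem : ∀ x : D, ψ (ψ x) = ψ x)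
    (A : Set G)
    (hA : A = {g : G | ψ (⨅ h ∈ A, δ h) ≤ ψ (δ g)}) :
    A = {g : G | (⨅ h ∈ A, δ h) ≤ δ g} :=
  extent_of_projected_is_extent_general δ ψ hmono A hA
end

section
/- Let (G, (D, ⊓), δ) be a pattern structure with D a complete lattice and ψ a projection on D. If (A, e) is a pattern concept of the projected pattern structure, i.e. e = ψ(⨅_{g ∈ A} δ(g)) and A = {g ∈ G | e ≤ ψ(δ(g))}, then, setting d = ⨅_{g ∈ A} δ(g), the pair (A, d) is a pattern concept of the original pattern structure (A^⋄ = d and d^⋄ = A) and e = ψ(d). -/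
theorem projected_concept_from_original_concept_general {G D : Type*} [CompleteLattice D]
    (δ : G → D) (ψ : D → D)
    (hmono : Monotone ψ)
    (A : Set G) (e : D)
    (he : e = ψ (⨅ g ∈ A, δ g))
    (hA : A = {g : G | e ≤ ψ (δ g)}) :
    A = {g : G | (⨅ h ∈ A, δ h) ≤ δ g} ∧ e = ψ (⨅ h ∈ A, δ h) := by
  refine ⟨Set.Subset.antisymm (fun g hg => biInf_le δ hg) fun g hle => ?_, he⟩
  rw [hA]
  exact he ▸ hmono hle

/-- If `(A, e)` is a pattern concept of the projected pattern structure,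
then with `d = ⨅_{g ∈ A} δ g`, the pair `(A, d)` is a pattern concept of the original
pattern structure and `e = ψ d`. -/
theorem projected_concept_from_original_concept {G D : Type*} [CompleteLattice D]
    (δ : G → D) (ψ : D → D)
    (hmono : Monotone ψ) (hcontr : ∀ x : D, ψ x ≤ x) (hidem : ∀ x : D, ψ (ψ x) = ψ x)
    (A : Set G) (e : D)
    (he : e = ψ (⨅ g ∈ A, δ g))
    (hA : A = {g : G | e ≤ ψ (δ g)}) :
    A = {g : G | (⨅ h ∈ A, δ h) ≤ δ g} ∧ e = ψ (⨅ h ∈ A, δ h) :=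
  projected_concept_from_original_concept_general δ ψ hmono A e he hA
end

section
/- Let (E, ⊓) be a meet-semilattice with a least element ⊥ and let ψ_E be a projection on E. The alphabet projection is idempotent: for every set d of sequences over E, ψ(ψ(d)) = ψ(d). -/
/-- `IsSubseq t s`: `t` is a subsequence of `s` in the generalized sense: there are
strictly increasing indices `j` with `t_i ⊓ s_{j i} = t_i` for all `i`. -/
def IsSubseq {E : Type*} [SemilatticeInf E] (t s : List E) : Prop :=
  ∃ j : Fin t.length → Fin s.length, StrictMono j ∧
    ∀ i : Fin t.length, t.get i ⊓ s.get (j i) = t.get i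

/-- A sequence is valid if none of its entries is the bottom element. -/
def ValidSeq {E : Type*} [SemilatticeInf E] [OrderBot E] (s : List E) : Prop :=
  ∀ a ∈ s, a ≠ ⊥

/-- The alphabet projection of a set of sequences: the valid sequences that are
subsequences of the element-wise `ψE`-image of some sequence of `d`. -/
def alphaProj {E : Type*} [SemilatticeInf E] [OrderBot E] (ψE : E → E)
    (d : Set (List E)) : Set (List E) :=
  {s | ValidSeq s ∧ ∃ t ∈ d, IsSubseq s (t.map ψE)}

/-! The generalized subsequence order is Mathlib's `List.SublistForall₂ (· ≤ ·)`, which is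
transitive and preserved by monotone maps. Hence a subsequence of `ψ t`, with `t` a subsequence
of `ψ u`, is a subsequence of `ψ (ψ u) = ψ u`. Conversely, if `s` is a subsequence of `ψ u`, the
sublist `r` of `ψ u` witnessing this is valid because it dominates `s` entrywise, so `r ∈ ψ(d)`;
and `ψ r = r` by idempotence, so `s ∈ ψ(ψ(d))`. -/

namespace List

theorem SublistForall₂.imp {α β : Type*} {R S : α → β → Prop} (H : ∀ a b, R a b → S a b)
    {l₁ : List α} {l₂ : List β} (h : SublistForall₂ R l₁ l₂) : SublistForall₂ S l₁ l₂ := by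
  induction h with
  | nil => exact .nil
  | cons hab _ ih => exact .cons (H _ _ hab) ih
  | cons_right _ ih => exact .cons_right ih

theorem SublistForall₂.map_of_monotone {α β : Type*} [Preorder α] [Preorder β] {f : α → β}
    (hf : Monotone f) {l₁ l₂ : List α} (h : SublistForall₂ (· ≤ ·) l₁ l₂) :
    SublistForall₂ (· ≤ ·) (l₁.map f) (l₂.map f) := by
  rw [sublistForall₂_map_left_iff, sublistForall₂_map_right_iff]
  exact h.imp fun _ _ hab => hf hab

end List

open List

section

variable {E : Type*} [SemilatticeInf E]

theorem isSubseq_iff_sublistForall₂ {t s : List E} :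
    IsSubseq t s ↔ SublistForall₂ (· ≤ ·) t s := by
  rw [sublistForall₂_iff]
  constructor
  · rintro ⟨j, hj, hle⟩
    refine ⟨ofFn fun i => s.get (j i), forall₂_iff_get.2 ⟨length_ofFn.symm, fun i _ _ => ?_⟩, ?_⟩
    · simpa using inf_eq_left.1 (hle ⟨i, ‹_›⟩)
    · rw [sublist_iff_exists_fin_orderEmbedding_get_eq]
      exact ⟨(Fin.castOrderIso length_ofFn).toOrderEmbedding.trans
        (OrderEmbedding.ofStrictMono j hj), fun _ => by simp [Fin.cast]⟩
  · rintro ⟨r, htr, hrs⟩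
    obtain ⟨f, hf⟩ := sublist_iff_exists_fin_orderEmbedding_get_eq.1 hrs
    refine ⟨fun i => f (i.cast htr.length_eq), f.strictMono.comp (Fin.cast_strictMono _),
      fun i => inf_eq_left.2 ?_⟩
    exact (htr.get i.2 _).trans_eq (hf _)

variable [OrderBot E]

theorem ValidSeq.of_forall₂_le {s r : List E} (h : Forall₂ (· ≤ ·) s r) (hs : ValidSeq s) :
    ValidSeq r := by
  induction h with
  | nil => exact hs
  | cons hab _ ih =>
    simp only [ValidSeq, forall_mem_cons] at hs ⊢
    exact ⟨fun hb => hs.1 (le_bot_iff.1 (hb ▸ hab)), ih hs.2⟩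

theorem alphaProj_eq_sublistForall₂ (ψE : E → E) (d : Set (List E)) :
    alphaProj ψE d = {s | ValidSeq s ∧ ∃ t ∈ d, SublistForall₂ (· ≤ ·) s (t.map ψE)} := by
  simp only [alphaProj, isSubseq_iff_sublistForall₂]

variable {ψE : E → E}

theorem alphaProj_alphaProj_subset (hmono : Monotone ψE) (hidem : ∀ x, ψE (ψE x) = ψE x)
    (d : Set (List E)) : alphaProj ψE (alphaProj ψE d) ⊆ alphaProj ψE d := by
  rw [alphaProj_eq_sublistForall₂, alphaProj_eq_sublistForall₂]
  rintro s ⟨hs, t, ⟨-, u, hu, htu⟩, hst⟩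
  have htu' := htu.map_of_monotone hmono
  rw [map_map, show ψE ∘ ψE = ψE from funext hidem] at htu'
  exact ⟨hs, u, hu, _root_.trans hst htu'⟩

theorem subset_alphaProj_alphaProj (hidem : ∀ x, ψE (ψE x) = ψE x) (d : Set (List E)) :
    alphaProj ψE d ⊆ alphaProj ψE (alphaProj ψE d) := by
  rw [alphaProj_eq_sublistForall₂, alphaProj_eq_sublistForall₂]
  rintro s ⟨hs, u, hu, hsu⟩
  obtain ⟨r, hsr, hru⟩ := sublistForall₂_iff.1 hsu
  obtain ⟨v, -, rfl⟩ := sublist_map_iff.1 hru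
  refine ⟨hs, v.map ψE, ⟨hs.of_forall₂_le hsr, u, hu, hru.sublistForall₂⟩, ?_⟩
  rw [map_map, show ψE ∘ ψE = ψE from funext hidem]
  exact sublistForall₂_iff.2 ⟨_, hsr, .refl _⟩

end

theorem alphaProj_idempotent_general {E : Type*} [SemilatticeInf E] [OrderBot E] (ψE : E → E)
    (hmono : Monotone ψE) (hidem : ∀ x : E, ψE (ψE x) = ψE x)
    (d : Set (List E)) :
    alphaProj ψE (alphaProj ψE d) = alphaProj ψE d :=
  (alphaProj_alphaProj_subset hmono hidem d).antisymm (subset_alphaProj_alphaProj hidem d)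

/-- The alphabet projection is idempotent: `ψ(ψ(d)) = ψ(d)` for every set
`d` of sequences. -/
theorem alphaProj_idempotent {E : Type*} [SemilatticeInf E] [OrderBot E] (ψE : E → E)
    (hmono : Monotone ψE) (hcontr : ∀ x : E, ψE x ≤ x) (hidem : ∀ x : E, ψE (ψE x) = ψE x)
    (d : Set (List E)) :
    alphaProj ψE (alphaProj ψE d) = alphaProj ψE d :=
  alphaProj_idempotent_general ψE hmono hidem d
end

section
/- Let (G, M, I) be a formal context with G finite, and let (A, B) and (C, E) be formal concepts with C ⊊ A. Then the number of subsets S ⊆ A with S' = B is at most 2^{|A|} − 2^{|C|}; consequently the stability satisfies σ((A, B)) ≤ 1 − 1/2^{|A ∖ C|}. -/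
/-! If `S ⊆ A` has `S' = B` then `S'' = B' = A`; were `S` contained in the extent `C`, its
closure `S''` would be too, contradicting `C ⊊ A`. So every such `S` lies in `𝒫 A \ 𝒫 C`,
a family of `2^|A| - 2^|C|` sets. -/

open Set Order

theorem not_subset_of_upperPolar_eq {α β : Type*} {r : α → β → Prop} {A C S : Set α}
    {B : Set β} (hC : IsExtent r C) (hBA : lowerPolar r B = A) (hCA : C ⊂ A)
    (hSB : upperPolar r S = B) : ¬S ⊆ C := fun hSC =>
  hCA.not_subset (hBA ▸ hSB ▸ hC.lowerPolar_upperPolar_subset hSC)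

theorem ncard_le_two_pow_sub_two_pow {α : Type*} {F : Set (Set α)} {A C : Set α}
    (hA : A.Finite) (hCA : C ⊆ A) (hF : F ⊆ 𝒫 A \ 𝒫 C) :
    F.ncard ≤ 2 ^ A.ncard - 2 ^ C.ncard := by
  calc F.ncard ≤ (𝒫 A \ 𝒫 C).ncard := ncard_le_ncard hF hA.powerset.sdiff
    _ = 2 ^ A.ncard - 2 ^ C.ncard := by
      rw [ncard_sdiff' (powerset_mono.2 hCA) hA.powerset, ncard_powerset A hA,
        ncard_powerset C (hA.subset hCA)]

theorem cast_div_two_pow_le_one_sub {n a c : ℕ} (hca : c ≤ a) (hn : n ≤ 2 ^ a - 2 ^ c) :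
    (n : ℝ) / 2 ^ a ≤ 1 - 1 / 2 ^ (a - c) := by
  have hpow : (2 : ℝ) ^ a = 2 ^ (a - c) * 2 ^ c := by rw [← pow_add, Nat.sub_add_cancel hca]
  have hn' : (n : ℝ) ≤ 2 ^ a - 2 ^ c := by
    rify [Nat.pow_le_pow_right two_pos hca] at hn
    exact hn
  rw [div_le_iff₀ (by positivity)]
  calc (n : ℝ) ≤ 2 ^ a - 2 ^ c := hn'
    _ = (1 - 1 / 2 ^ (a - c)) * 2 ^ a := by rw [hpow]; field_simp

theorem stability_upper_bound_general {G M : Type*} [Fintype G] (I : G → M → Prop)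
    (A C : Set G) (B E : Set M)
    (hBA : {g : G | ∀ m ∈ B, I g m} = A)
    (hEC : {g : G | ∀ m ∈ E, I g m} = C)
    (hCA : C ⊂ A) :
    {S : Set G | S ⊆ A ∧ {m : M | ∀ g ∈ S, I g m} = B}.ncard ≤
      2 ^ A.ncard - 2 ^ C.ncard ∧
    ({S : Set G | S ⊆ A ∧ {m : M | ∀ g ∈ S, I g m} = B}.ncard : ℝ) / 2 ^ A.ncard ≤
      1 - 1 / 2 ^ (A \ C).ncard := by
  have hcount : {S : Set G | S ⊆ A ∧ {m : M | ∀ g ∈ S, I g m} = B}.ncard ≤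
      2 ^ A.ncard - 2 ^ C.ncard :=
    ncard_le_two_pow_sub_two_pow A.toFinite hCA.subset fun S ⟨hSA, hSB⟩ =>
      ⟨hSA, not_subset_of_upperPolar_eq ⟨E, hEC⟩ hBA hCA hSB⟩
  refine ⟨hcount, ?_⟩
  rw [ncard_sdiff' hCA.subset]
  exact cast_div_two_pow_le_one_sub (ncard_le_ncard hCA.subset) hcount

/-- Let `(A, B)` and `(C, E)` be formal concepts of a formal context with
`G` finite and `C ⊊ A`. Then the number of `S ⊆ A` with `S' = B` is at most
`2^|A| − 2^|C|`, and the stability of `(A, B)` is at most `1 − 1/2^{|A \ C|}`. -/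
theorem stability_upper_bound {G M : Type*} [Fintype G] (I : G → M → Prop)
    (A C : Set G) (B E : Set M)
    (hAB : {m : M | ∀ g ∈ A, I g m} = B) (hBA : {g : G | ∀ m ∈ B, I g m} = A)
    (hCE : {m : M | ∀ g ∈ C, I g m} = E) (hEC : {g : G | ∀ m ∈ E, I g m} = C)
    (hCA : C ⊂ A) :
    {S : Set G | S ⊆ A ∧ {m : M | ∀ g ∈ S, I g m} = B}.ncard ≤
      2 ^ A.ncard - 2 ^ C.ncard ∧
    ({S : Set G | S ⊆ A ∧ {m : M | ∀ g ∈ S, I g m} = B}.ncard : ℝ) / 2 ^ A.ncard ≤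
      1 - 1 / 2 ^ (A \ C).ncard :=
  stability_upper_bound_general I A C B E hBA hEC hCA
end
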